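/- Descent of elements of mGT_q (Proposition 6.3, existence and uniqueness): for positive natural numbers p, q with p ∣ q and every permutation σ ∈ mGT_q, there exists a unique permutation τ of ZMod p such that t_{q,p} ∘ σ = τ ∘ t_{q,p}, and moreover this τ belongs to mGT_p. -/

import Mathlib

/-- The multiplication-by-`d` permutation `a ↦ d * a` of `ZMod q`, for a unit `d`. -/
def multPerm (q : ℕ) (d : (ZMod q)ˣ) : Equiv.Perm (ZMod q) where
  toFun a := (d : ZMod q) * a
  invFun a := ((d⁻¹ : (ZMod q)ˣ) : ZMod q) * a
  left_inv a := by simp [← mul_assoc]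
  right_inv a := by simp [← mul_assoc]

/-- The involution `θ_q : a ↦ 1 - a` of `ZMod q` as a permutation. -/
def thetaPerm (q : ℕ) : Equiv.Perm (ZMod q) where
  toFun a := 1 - a
  invFun a := 1 - a
  left_inv a := by ring
  right_inv a := by ring

/-- The group `mGT_q`: the subgroup of the permutation group of `ZMod q` generated
by the multiplication permutations `a ↦ d * a` for all units `d`, together with `θ_q`. -/
def mGT (q : ℕ) : Subgroup (Equiv.Perm (ZMod q)) :=
  Subgroup.closure (Set.range (multPerm q) ∪ {thetaPerm q})

/-!
Reduction `t_{q,p}` is a ring homomorphism, so it carries `a ↦ d * a` to `a ↦ t(d) * a` and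
`θ_q` to `θ_p`: every generator of `mGT_q` descends to a generator of `mGT_p`. The permutations
descending to an element of `mGT_p` form a subgroup, hence contain `mGT_q`, and the descended
permutation is unique because `t_{q,p}` is surjective.
-/

open Function Equiv

theorem Function.Semiconj.eq_of_surjective {α β : Type*} {f : α → β} (hf : Surjective f)
    {g : α → α} {τ τ' : β → β} (h : Semiconj f g τ) (h' : Semiconj f g τ') : τ = τ' :=
  funext <| hf.forall.2 fun x => (h x).symm.trans (h' x)

def descentSubgroup {α β : Type*} (f : α → β) (H : Subgroup (Perm β)) : Subgroup (Perm α) where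
  carrier := {σ | ∃ τ ∈ H, Semiconj f σ τ}
  one_mem' := ⟨1, H.one_mem, Semiconj.id_right⟩
  mul_mem' := fun ⟨τ, hτ, hσ⟩ ⟨τ', hτ', hσ'⟩ => ⟨τ * τ', H.mul_mem hτ hτ', hσ.comp_right hσ'⟩
  inv_mem' := fun {σ} ⟨τ, hτ, hσ⟩ =>
    ⟨τ⁻¹, H.inv_mem hτ, hσ.inverses_right σ.apply_symm_apply τ.symm_apply_apply⟩

section Descent

variable {p q : ℕ} (h : p ∣ q)

theorem semiconj_castHom_multPerm (d : (ZMod q)ˣ) :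
    Semiconj (ZMod.castHom h (ZMod p)) (multPerm q d) (multPerm p (ZMod.unitsMap h d)) :=
  fun a => map_mul (ZMod.castHom h (ZMod p)) (d : ZMod q) a

theorem semiconj_castHom_thetaPerm :
    Semiconj (ZMod.castHom h (ZMod p)) (thetaPerm q) (thetaPerm p) :=
  fun a => (map_sub (ZMod.castHom h (ZMod p)) 1 a).trans (by rw [map_one]; rfl)

theorem mGT_le_descentSubgroup :
    mGT q ≤ descentSubgroup (ZMod.castHom h (ZMod p)) (mGT p) := by
  refine (Subgroup.closure_le _).2 ?_
  rintro _ (⟨d, rfl⟩ | rfl)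
  · exact ⟨_, Subgroup.subset_closure (Or.inl ⟨_, rfl⟩), semiconj_castHom_multPerm h d⟩
  · exact ⟨_, Subgroup.subset_closure (Or.inr rfl), semiconj_castHom_thetaPerm h⟩

end Descent

theorem mGT_descent_general (p q : ℕ) (h : p ∣ q)
    (σ : Equiv.Perm (ZMod q)) (hσ : σ ∈ mGT q) :
    (∃! τ : Equiv.Perm (ZMod p),
        ⇑(ZMod.castHom h (ZMod p)) ∘ ⇑σ = ⇑τ ∘ ⇑(ZMod.castHom h (ZMod p))) ∧
    ∀ τ : Equiv.Perm (ZMod p),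
        ⇑(ZMod.castHom h (ZMod p)) ∘ ⇑σ = ⇑τ ∘ ⇑(ZMod.castHom h (ZMod p)) →
        τ ∈ mGT p := by
  simp only [← semiconj_iff_comp_eq]
  obtain ⟨τ₀, hτ₀, hστ₀⟩ := mGT_le_descentSubgroup h hσ
  have unique (τ : Perm (ZMod p)) (hστ : Semiconj (ZMod.castHom h (ZMod p)) σ τ) : τ = τ₀ :=
    DFunLike.coe_injective (hστ.eq_of_surjective (ZMod.castHom_surjective h) hστ₀)
  exact ⟨⟨τ₀, hστ₀, unique⟩, fun τ hστ => unique τ hστ ▸ hτ₀⟩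

/-- Descent of elements of `mGT_q` (Proposition 6.3): for `p ∣ q` and every
`σ ∈ mGT_q`, there exists a unique permutation `τ` of `ZMod p` with
`t_{q,p} ∘ σ = τ ∘ t_{q,p}`, and moreover every such `τ` belongs to `mGT_p`. -/
theorem mGT_descent (p q : ℕ) (hp : 0 < p) (hq : 0 < q) (h : p ∣ q)
    (σ : Equiv.Perm (ZMod q)) (hσ : σ ∈ mGT q) :
    (∃! τ : Equiv.Perm (ZMod p),
        ⇑(ZMod.castHom h (ZMod p)) ∘ ⇑σ = ⇑τ ∘ ⇑(ZMod.castHom h (ZMod p))) ∧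
    ∀ τ : Equiv.Perm (ZMod p),
        ⇑(ZMod.castHom h (ZMod p)) ∘ ⇑σ = ⇑τ ∘ ⇑(ZMod.castHom h (ZMod p)) →
        τ ∈ mGT p :=
  mGT_descent_general p q h σ hσ
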